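/- Let (X, M, *) be a compact fuzzy metric space with the Łukasiewicz t-norm. If a sequence (μᵢ) in P(X) converges weakly* to μ ∈ P(X), then (μᵢ) converges to μ in the topology induced by the fuzzy Prokhorov metric M̂. Consequently, the topology induced by M̂ on P(X) coincides with the weak* topology. -/

import Mathlib

open Set MeasureTheory Filter Topology

noncomputable section

/-- The Łukasiewicz t-norm. -/
def luk (a b : ℝ) : ℝ := max (a + b - 1) 0

/-- A continuous t-norm on `[0,1]`. -/
structure IsContinuousTNorm (star : ℝ → ℝ → ℝ) : Prop where
  maps_to : ∀ a b, a ∈ Icc (0:ℝ) 1 → b ∈ Icc (0:ℝ) 1 → star a b ∈ Icc (0:ℝ) 1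
  comm : ∀ a b, a ∈ Icc (0:ℝ) 1 → b ∈ Icc (0:ℝ) 1 → star a b = star b a
  assoc : ∀ a b c, a ∈ Icc (0:ℝ) 1 → b ∈ Icc (0:ℝ) 1 → c ∈ Icc (0:ℝ) 1 →
    star (star a b) c = star a (star b c)
  continuous : ContinuousOn (fun p : ℝ × ℝ => star p.1 p.2) (Icc 0 1 ×ˢ Icc 0 1)
  one_right : ∀ a, a ∈ Icc (0:ℝ) 1 → star a 1 = a
  mono : ∀ a b c d, a ∈ Icc (0:ℝ) 1 → b ∈ Icc (0:ℝ) 1 → c ∈ Icc (0:ℝ) 1 →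
    d ∈ Icc (0:ℝ) 1 → a ≤ c → b ≤ d → star a b ≤ star c d

/-- A fuzzy metric (George–Veeramani) with respect to a t-norm `star`. -/
structure IsFuzzyMetric {X : Type*} (M : X → X → ℝ → ℝ) (star : ℝ → ℝ → ℝ) : Prop where
  pos : ∀ x y t, 0 < t → 0 < M x y t
  le_one : ∀ x y t, 0 < t → M x y t ≤ 1
  eq_one_iff : ∀ x y t, 0 < t → (M x y t = 1 ↔ x = y)
  symm : ∀ x y t, 0 < t → M x y t = M y x t
  triangle : ∀ x y z t s, 0 < t → 0 < s → star (M x y t) (M y z s) ≤ M x z (t + s)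
  continuousOn : ∀ x y, ContinuousOn (fun t => M x y t) (Ioi (0:ℝ))

/-- The open ball `B(x,r,t)` in a fuzzy metric space. -/
def fmBall {X : Type*} (M : X → X → ℝ → ℝ) (x : X) (r t : ℝ) : Set X :=
  {y | 1 - r < M x y t}

/-- The `r,t`-expansion `A^{r,t}` of a set `A`. -/
def fmExpand {X : Type*} (M : X → X → ℝ → ℝ) (A : Set X) (r t : ℝ) : Set X :=
  ⋃ x ∈ A, fmBall M x r t

/-- The fuzzy metric `M` generates the given topology on `X`. -/
def GeneratesTopology {X : Type*} [TopologicalSpace X] (M : X → X → ℝ → ℝ) : Prop :=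
  TopologicalSpace.IsTopologicalBasis
    {s : Set X | ∃ x r t, 0 < r ∧ r < 1 ∧ 0 < t ∧ s = fmBall M x r t}

/-- The set of admissible radii in the definition of the fuzzy Prokhorov metric. -/
def prokSet {X : Type*} [MeasurableSpace X] (M : X → X → ℝ → ℝ)
    (μ ν : Measure X) (t : ℝ) : Set ℝ :=
  {r | 0 < r ∧ r < 1 ∧ ∀ A : Set X, MeasurableSet A →
    μ A ≤ ν (fmExpand M A r t) + ENNReal.ofReal r ∧
    ν A ≤ μ (fmExpand M A r t) + ENNReal.ofReal r}

/-- The fuzzy Prokhorov function `M̂` on measures. -/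
def fuzzyProkhorov {X : Type*} [MeasurableSpace X] (M : X → X → ℝ → ℝ)
    (μ ν : Measure X) (t : ℝ) : ℝ :=
  1 - sInf (prokSet M μ ν t)

/-!
Compactness does the work twice. First, it makes `M` uniformly left continuous in time and covers
`X` by finitely many small balls; Urysohn functions for the finitely many unions of these balls
show that weak*-close measures are `M̂`-close, and the triangle inequality for `M̂` then makes
every `M̂`-ball weak*-open, which already gives the convergence statement. Second, `P(X)` is
weak*-compact, so if no `M̂`-ball around `μ` fitted into a weak*-open `U ∋ μ`, some `μ' ∉ U` would
lie in the closure of all of them. Such a `μ'` is `M̂`-indistinguishable from `μ`; as a closed set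
is the intersection of its fuzzy expansions, `μ` and `μ'` agree on closed sets, so `μ' = μ`.
-/

theorem measure_le_add_of_integral_le_add {X : Type*} [MeasurableSpace X] {μ ν : Measure X}
    [IsFiniteMeasure μ] [IsFiniteMeasure ν] {A B : Set X} {g : X → ℝ} {r : ℝ}
    (hA : MeasurableSet A) (hB : MeasurableSet B) (hgμ : Integrable g μ) (hgν : Integrable g ν)
    (hg : ∀ x, g x ∈ Icc 0 1) (hgA : EqOn g 1 A) (hgB : EqOn g 0 Bᶜ) (hr : 0 ≤ r)
    (h : ∫ x, g x ∂μ ≤ ∫ x, g x ∂ν + r) : μ A ≤ ν B + ENNReal.ofReal r := by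
  have hAg : A.indicator 1 ≤ g := fun x => by
    by_cases hx : x ∈ A
    · simp [indicator_of_mem hx, hgA hx]
    · simp [indicator_of_notMem hx, (hg x).1]
  have hgB' : g ≤ B.indicator 1 := fun x => by
    by_cases hx : x ∈ B
    · simp [indicator_of_mem hx, (hg x).2]
    · simp [indicator_of_notMem hx, hgB hx]
  have hμ : μ.real A ≤ ∫ x, g x ∂μ := by
    rw [← integral_indicator_one hA]
    exact integral_mono ((integrable_const 1).indicator hA) hgμ hAg
  have hν : ∫ x, g x ∂ν ≤ ν.real B := by
    rw [← integral_indicator_one hB]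
    exact integral_mono hgν ((integrable_const 1).indicator hB) hgB'
  rw [← ofReal_measureReal, ← ofReal_measureReal, ← ENNReal.ofReal_add measureReal_nonneg hr]
  exact ENNReal.ofReal_le_ofReal (by linarith)

section FuzzyProkhorov

variable {X : Type*} {M : X → X → ℝ → ℝ}

namespace IsFuzzyMetric

theorem luk_triangle (hM : IsFuzzyMetric M luk) (x y z : X) {s t : ℝ} (hs : 0 < s)
    (ht : 0 < t) : M x y s + M y z t - 1 ≤ M x z (s + t) :=
  (le_max_left _ _).trans (hM.triangle x y z s t hs ht)

theorem luk_triangle₃ (hM : IsFuzzyMetric M luk) (w x y z : X) {s t u : ℝ} (hs : 0 < s)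
    (ht : 0 < t) (hu : 0 < u) : M w x s + M x y t + M y z u - 2 ≤ M w z (s + t + u) := by
  linarith [hM.luk_triangle w x y hs ht, hM.luk_triangle w y z (add_pos hs ht) hu]

theorem mono (hM : IsFuzzyMetric M luk) (x y : X) {s t : ℝ} (hs : 0 < s) (hst : s ≤ t) :
    M x y s ≤ M x y t := by
  rcases hst.eq_or_lt with rfl | hlt
  · rfl
  have h := hM.luk_triangle x y y hs (sub_pos.2 hlt)
  rw [(hM.eq_one_iff y y _ (sub_pos.2 hlt)).2 rfl, add_sub_cancel] at h
  linarith

theorem exists_lt_of_lt (hM : IsFuzzyMetric M luk) (x y : X) {c t : ℝ} (ht : 0 < t)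
    (hc : c < M x y t) : ∃ s ∈ Ioo 0 t, c < M x y s := by
  have hcont : ContinuousAt (M x y) t := (hM.continuousOn x y).continuousAt (Ioi_mem_nhds ht)
  obtain ⟨s, hcs, hs⟩ := (((hcont.eventually (lt_mem_nhds hc)).filter_mono
    nhdsWithin_le_nhds).and (Ioo_mem_nhdsLT ht)).exists
  exact ⟨s, hs, hcs⟩

theorem mem_fmBall_self (hM : IsFuzzyMetric M luk) (x : X) {r t : ℝ} (hr : 0 < r)
    (ht : 0 < t) : x ∈ fmBall M x r t := by
  show 1 - r < M x x t
  rw [(hM.eq_one_iff x x t ht).2 rfl]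
  linarith

theorem fmBall_mono (hM : IsFuzzyMetric M luk) {x : X} {r r' t t' : ℝ} (ht : 0 < t)
    (hr : r ≤ r') (htt : t ≤ t') : fmBall M x r t ⊆ fmBall M x r' t' :=
  fun y (hy : 1 - r < _) => show 1 - r' < _ by linarith [hM.mono x y ht htt]

theorem subset_fmExpand (hM : IsFuzzyMetric M luk) {A : Set X} {r t : ℝ} (hr : 0 < r)
    (ht : 0 < t) : A ⊆ fmExpand M A r t := fun a ha =>
  mem_biUnion ha (hM.mem_fmBall_self a hr ht)

theorem fmExpand_mono (hM : IsFuzzyMetric M luk) {A : Set X} {r r' t t' : ℝ} (ht : 0 < t)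
    (hr : r ≤ r') (htt : t ≤ t') : fmExpand M A r t ⊆ fmExpand M A r' t' :=
  iUnion₂_mono fun _ _ => hM.fmBall_mono ht hr htt

theorem fmExpand_fmExpand_subset (hM : IsFuzzyMetric M luk) {A : Set X} {r ρ t τ : ℝ}
    (ht : 0 < t) (hτ : 0 < τ) :
    fmExpand M (fmExpand M A r t) ρ τ ⊆ fmExpand M A (r + ρ) (t + τ) := by
  simp only [fmExpand, iUnion_subset_iff]
  intro x hx y (hxy : 1 - ρ < M x y τ)
  obtain ⟨a, ha, hax : 1 - r < M a x t⟩ := mem_iUnion₂.1 hx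
  exact mem_biUnion ha (show 1 - (r + ρ) < M a y (t + τ) by
    linarith [hM.luk_triangle a x y ht hτ])

theorem exists_subset_biUnion_fmBall (hM : IsFuzzyMetric M luk) {C : Finset X}
    {ρ ρ' τ τ' : ℝ} (hτ : 0 < τ) (hτ' : 0 < τ') (hC : univ ⊆ ⋃ c ∈ C, fmBall M c ρ τ)
    (A : Set X) : ∃ J ⊆ C, A ⊆ ⋃ c ∈ J, fmBall M c ρ τ ∧
      ⋃ c ∈ J, fmBall M c ρ' τ' ⊆ fmExpand M A (ρ + ρ') (τ + τ') := by
  classical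
  refine ⟨C.filter fun c => (fmBall M c ρ τ ∩ A).Nonempty, Finset.filter_subset _ _,
    fun a ha => ?_, iUnion₂_subset fun c hc y (hcy : _ < M c y _) => ?_⟩
  · obtain ⟨c, hc, hac⟩ := mem_iUnion₂.1 (hC (mem_univ a))
    exact mem_biUnion (Finset.mem_filter.2 ⟨hc, a, hac, ha⟩) hac
  · obtain ⟨-, a, hac : 1 - ρ < M c a τ, ha⟩ := Finset.mem_filter.1 hc
    have := hM.luk_triangle a c y hτ hτ'
    rw [hM.symm a c _ hτ] at this
    exact mem_biUnion ha (show 1 - (ρ + ρ') < M a y (τ + τ') by linarith)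

end IsFuzzyMetric

theorem fmExpand_subset_fmExpand_of_forall_sub_le {A : Set X} {r η t t₀ : ℝ}
    (h : ∀ x y, M x y t - η ≤ M x y t₀) : fmExpand M A r t ⊆ fmExpand M A (r + η) t₀ :=
  iUnion₂_mono fun x _ y (hy : 1 - r < _) => show 1 - (r + η) < _ by linarith [h x y]

section Topology

variable [TopologicalSpace X]

theorem GeneratesTopology.isOpen_fmBall (hgen : GeneratesTopology M) (x : X) {r t : ℝ}
    (hr0 : 0 < r) (hr1 : r < 1) (ht : 0 < t) : IsOpen (fmBall M x r t) :=
  hgen.isOpen ⟨x, r, t, hr0, hr1, ht, rfl⟩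

theorem GeneratesTopology.isOpen_fmExpand (hgen : GeneratesTopology M) (A : Set X) {r t : ℝ}
    (hr0 : 0 < r) (hr1 : r < 1) (ht : 0 < t) : IsOpen (fmExpand M A r t) :=
  isOpen_biUnion fun x _ => hgen.isOpen_fmBall x hr0 hr1 ht

namespace IsFuzzyMetric

theorem exists_fmBall_subset (hM : IsFuzzyMetric M luk) (hgen : GeneratesTopology M)
    {U : Set X} {x : X} (hU : IsOpen U) (hx : x ∈ U) :
    ∃ r t, 0 < r ∧ r < 1 ∧ 0 < t ∧ fmBall M x r t ⊆ U := by
  obtain ⟨_, ⟨z, ρ, s, -, -, hs, rfl⟩, hxz, hU⟩ := hgen.exists_subset_of_mem_open hx hU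
  obtain ⟨s', ⟨hs'0, hs's⟩, hzx⟩ := hM.exists_lt_of_lt z x hs hxz
  -- a ball around `x` of time `s - s'` fits in the basic ball thanks to the slack at time `s'`
  set η := M z x s' - (1 - ρ)
  refine ⟨min η (1 / 2), s - s', lt_min (by linarith) one_half_pos,
    (min_le_right _ _).trans_lt one_half_lt_one, sub_pos.2 hs's, fun y hy => hU ?_⟩
  have hy : 1 - min η (1 / 2) < M x y (s - s') := hy
  have := hM.luk_triangle z x y hs'0 (sub_pos.2 hs's)
  rw [add_sub_cancel] at this
  show 1 - ρ < M z y s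
  linarith [min_le_left η (1 / 2)]

theorem continuous_uncurry (hM : IsFuzzyMetric M luk) (hgen : GeneratesTopology M) {t : ℝ}
    (ht : 0 < t) : Continuous fun p : X × X => M p.1 p.2 t := by
  refine continuous_iff_continuousAt.2 fun ⟨x₀, y₀⟩ => Metric.tendsto_nhds.2 fun ε hε => ?_
  obtain ⟨δ, hδ, hcont⟩ := Metric.continuousAt_iff.1
    ((hM.continuousOn x₀ y₀).continuousAt (Ioi_mem_nhds ht)) (ε / 2) (half_pos hε)
  set s := min (δ / 3) (t / 3)
  have hs : 0 < s := lt_min (by linarith) (by linarith)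
  have hlo := @hcont (t - 2 * s) (by
    rw [Real.dist_eq, abs_lt]; constructor <;> linarith [min_le_left (δ / 3) (t / 3)])
  have hhi := @hcont (t + 2 * s) (by
    rw [Real.dist_eq, abs_lt]; constructor <;> linarith [min_le_left (δ / 3) (t / 3)])
  rw [Real.dist_eq, abs_lt] at hlo hhi
  set r := min (ε / 4) (1 / 2)
  have hr : 0 < r := lt_min (by linarith) one_half_pos
  have hr1 : r < 1 := (min_le_right _ _).trans_lt one_half_lt_one
  have hnhds : fmBall M x₀ r s ×ˢ fmBall M y₀ r s ∈ 𝓝 (x₀, y₀) :=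
    prod_mem_nhds ((hgen.isOpen_fmBall x₀ hr hr1 hs).mem_nhds (hM.mem_fmBall_self x₀ hr hs))
      ((hgen.isOpen_fmBall y₀ hr hr1 hs).mem_nhds (hM.mem_fmBall_self y₀ hr hs))
  filter_upwards [hnhds] with ⟨x, y⟩ ⟨hx, hy⟩
  have hx : 1 - r < M x₀ x s := hx
  have hy : 1 - r < M y₀ y s := hy
  have hts : 0 < t - 2 * s := by linarith [min_le_right (δ / 3) (t / 3)]
  have hlow := hM.luk_triangle₃ x x₀ y₀ y hs hts hs
  have hup := hM.luk_triangle₃ x₀ x y y₀ hs ht hs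
  rw [show s + (t - 2 * s) + s = t by ring, hM.symm x x₀ s hs] at hlow
  rw [show s + t + s = t + 2 * s by ring, hM.symm y y₀ s hs] at hup
  rw [Real.dist_eq, abs_lt]
  constructor <;> linarith [min_le_left (ε / 4) (1 / 2)]

theorem continuous_right (hM : IsFuzzyMetric M luk) (hgen : GeneratesTopology M) (x : X)
    {t : ℝ} (ht : 0 < t) : Continuous fun y => M x y t :=
  (hM.continuous_uncurry hgen ht).comp (continuous_const.prodMk continuous_id)

theorem t2Space (hM : IsFuzzyMetric M luk) (hgen : GeneratesTopology M) : T2Space X := by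
  refine t2_iff_isClosed_diagonal.2 ?_
  convert isClosed_eq (hM.continuous_uncurry hgen one_pos) continuous_const using 1
  ext ⟨x, y⟩
  exact (hM.eq_one_iff x y 1 one_pos).symm

theorem closure_fmBall_subset (hM : IsFuzzyMetric M luk) (hgen : GeneratesTopology M) (x : X)
    {r r' t : ℝ} (hr : r < r') (ht : 0 < t) : closure (fmBall M x r t) ⊆ fmBall M x r' t :=
  fun y hy => show 1 - r' < M x y t by
    have : 1 - r ≤ M x y t := closure_lt_subset_le (f := fun _ => 1 - r) continuous_const
      (hM.continuous_right hgen x ht) hy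
    linarith

theorem iInter_fmExpand_eq (hM : IsFuzzyMetric M luk) (hgen : GeneratesTopology M)
    {F : Set X} (hF : IsClosed F) {δ : ℕ → ℝ} (hδ0 : ∀ n, 0 < δ n) (hδ : Tendsto δ atTop (𝓝 0)) :
    ⋂ n, fmExpand M F (δ n) (δ n) = F := by
  refine Subset.antisymm (fun y hy => ?_)
    (subset_iInter fun n => hM.subset_fmExpand (hδ0 n) (hδ0 n))
  rw [← hF.closure_eq, mem_closure_iff]
  intro V hV hyV
  obtain ⟨r, t, hr, -, ht, hsub⟩ := hM.exists_fmBall_subset hgen hV hyV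
  obtain ⟨n, hn⟩ := (hδ.eventually (gt_mem_nhds (lt_min hr ht))).exists
  obtain ⟨x, hx, hxy : 1 - δ n < M x y (δ n)⟩ := mem_iUnion₂.1 (mem_iInter.1 hy n)
  refine ⟨x, hsub (show 1 - r < M y x t from ?_), hx⟩
  rw [hM.symm y x t ht]
  linarith [hM.mono x y (hδ0 n) (hn.le.trans (min_le_right r t)), min_le_left r t]

variable [CompactSpace X]

theorem exists_pos_le (hM : IsFuzzyMetric M luk) (hgen : GeneratesTopology M) {t : ℝ}
    (ht : 0 < t) : ∃ m > 0, ∀ x y, m ≤ M x y t := by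
  rcases isEmpty_or_nonempty X with hX | hX
  · exact ⟨1, one_pos, fun x => isEmptyElim x⟩
  obtain ⟨p, -, hp⟩ := isCompact_univ.exists_isMinOn univ_nonempty
    (hM.continuous_uncurry hgen ht).continuousOn
  exact ⟨M p.1 p.2 t, hM.pos _ _ _ ht, fun x y => hp (mem_univ (x, y))⟩

theorem exists_uniform_left_approx (hM : IsFuzzyMetric M luk) (hgen : GeneratesTopology M)
    {t ε : ℝ} (ht : 0 < t) (hε : 0 < ε) :
    ∃ t₀ ∈ Ioo 0 t, ∀ x y, M x y t - ε < M x y t₀ := by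
  have : Nonempty (Ioo 0 t) := (nonempty_Ioo.2 ht).to_subtype
  let U : Ioo 0 t → Set (X × X) := fun s => {p | M p.1 p.2 t - ε < M p.1 p.2 s}
  have hmono : Monotone U := fun s s' hss' p (hp : _ < _) =>
    show _ < _ from hp.trans_le (hM.mono _ _ s.2.1 hss')
  obtain ⟨s, hs⟩ := isCompact_univ.elim_directed_cover U
    (fun s => isOpen_lt ((hM.continuous_uncurry hgen ht).sub continuous_const)
      (hM.continuous_uncurry hgen s.2.1))
    (fun p _ => by
      obtain ⟨s, hs, hlt⟩ := hM.exists_lt_of_lt p.1 p.2 ht (sub_lt_self _ hε)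
      exact mem_iUnion.2 ⟨⟨s, hs⟩, hlt⟩)
    hmono.directed_le
  exact ⟨s, s.2, fun x y => hs (mem_univ (x, y))⟩

end IsFuzzyMetric

end Topology

section Prokhorov

variable [MeasurableSpace X]

theorem prokSet_bddBelow {μ ν : Measure X} {t : ℝ} : BddBelow (prokSet M μ ν t) :=
  ⟨0, fun _ hr => hr.1.le⟩

theorem prokSet_comm (μ ν : Measure X) (t : ℝ) : prokSet M μ ν t = prokSet M ν μ t := by
  ext r
  exact and_congr_right fun _ => and_congr_right fun _ =>
    forall₂_congr fun _ _ => and_comm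

theorem fuzzyProkhorov_comm (μ ν : Measure X) (t : ℝ) :
    fuzzyProkhorov M μ ν t = fuzzyProkhorov M ν μ t := by
  rw [fuzzyProkhorov, prokSet_comm]
  rfl

theorem mem_prokSet_of_fmExpand_subset {μ ν : Measure X} {r r' t t' : ℝ}
    (hr : r ∈ prokSet M μ ν t) (hrr' : r ≤ r') (hr' : r' < 1)
    (hsub : ∀ A, fmExpand M A r t ⊆ fmExpand M A r' t') : r' ∈ prokSet M μ ν t' := by
  obtain ⟨hr0, -, h⟩ := hr
  refine ⟨hr0.trans_le hrr', hr', fun A hA =>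
    ⟨(h A hA).1.trans (by gcongr; exact hsub A), (h A hA).2.trans (by gcongr; exact hsub A)⟩⟩

theorem IsFuzzyMetric.mem_prokSet_of_le (hM : IsFuzzyMetric M luk) {μ ν : Measure X}
    {r r' t t' : ℝ} (hr : r ∈ prokSet M μ ν t) (ht : 0 < t) (hrr' : r ≤ r') (hr' : r' < 1)
    (htt' : t ≤ t') : r' ∈ prokSet M μ ν t' :=
  mem_prokSet_of_fmExpand_subset hr hrr' hr' fun _ => hM.fmExpand_mono ht hrr' htt'

theorem IsFuzzyMetric.mem_prokSet_self (hM : IsFuzzyMetric M luk) (μ : Measure X) {r t : ℝ}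
    (hr0 : 0 < r) (hr1 : r < 1) (ht : 0 < t) : r ∈ prokSet M μ μ t := by
  refine ⟨hr0, hr1, fun A _ => ?_⟩
  have h : μ A ≤ μ (fmExpand M A r t) + ENNReal.ofReal r :=
    (measure_mono (hM.subset_fmExpand hr0 ht)).trans le_self_add
  exact ⟨h, h⟩

variable [TopologicalSpace X] [OpensMeasurableSpace X]

theorem IsFuzzyMetric.measure_le_fmExpand_add_trans (hM : IsFuzzyMetric M luk)
    (hgen : GeneratesTopology M) {μ ν ξ : Measure X} {e ρ t₁ t₂ : ℝ} (he0 : 0 < e) (he1 : e < 1)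
    (hρ : 0 ≤ ρ) (ht₁ : 0 < t₁) (ht₂ : 0 < t₂)
    (hμν : ∀ A, MeasurableSet A → μ A ≤ ν (fmExpand M A e t₁) + ENNReal.ofReal e)
    (hνξ : ∀ A, MeasurableSet A → ν A ≤ ξ (fmExpand M A ρ t₂) + ENNReal.ofReal ρ)
    {A : Set X} (hA : MeasurableSet A) :
    μ A ≤ ξ (fmExpand M A (e + ρ) (t₁ + t₂)) + ENNReal.ofReal (e + ρ) :=
  calc μ A ≤ ν (fmExpand M A e t₁) + ENNReal.ofReal e := hμν A hA
    _ ≤ ξ (fmExpand M (fmExpand M A e t₁) ρ t₂) + ENNReal.ofReal ρ + ENNReal.ofReal e := by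
      gcongr
      exact hνξ _ (hgen.isOpen_fmExpand A he0 he1 ht₁).measurableSet
    _ ≤ ξ (fmExpand M A (e + ρ) (t₁ + t₂)) + ENNReal.ofReal ρ + ENNReal.ofReal e := by
      gcongr
      exact hM.fmExpand_fmExpand_subset ht₁ ht₂
    _ = ξ (fmExpand M A (e + ρ) (t₁ + t₂)) + ENNReal.ofReal (e + ρ) := by
      rw [ENNReal.ofReal_add he0.le hρ, add_assoc, add_comm (ENNReal.ofReal ρ)]

theorem IsFuzzyMetric.add_mem_prokSet (hM : IsFuzzyMetric M luk) (hgen : GeneratesTopology M)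
    {μ ν ξ : Measure X} {e ρ t₁ t₂ : ℝ} (ht₁ : 0 < t₁) (ht₂ : 0 < t₂)
    (he : e ∈ prokSet M μ ν t₁) (hρ : ρ ∈ prokSet M ν ξ t₂) (h1 : e + ρ < 1) :
    e + ρ ∈ prokSet M μ ξ (t₁ + t₂) := by
  obtain ⟨he0, he1, hμν⟩ := he
  obtain ⟨hρ0, hρ1, hνξ⟩ := hρ
  refine ⟨add_pos he0 hρ0, h1, fun A hA => ⟨?_, ?_⟩⟩
  · exact hM.measure_le_fmExpand_add_trans hgen he0 he1 hρ0.le ht₁ ht₂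
      (fun A hA => (hμν A hA).1) (fun A hA => (hνξ A hA).1) hA
  · rw [add_comm e, add_comm t₁]
    exact hM.measure_le_fmExpand_add_trans hgen hρ0 hρ1 he0.le ht₂ ht₁
      (fun A hA => (hνξ A hA).2) (fun A hA => (hμν A hA).2) hA

theorem IsFuzzyMetric.measure_le_of_forall_mem_prokSet (hM : IsFuzzyMetric M luk)
    (hgen : GeneratesTopology M) {μ ν : Measure X} [IsFiniteMeasure ν] {δ : ℕ → ℝ}
    (hδ0 : ∀ n, 0 < δ n) (hδ_anti : Antitone δ) (hδ : Tendsto δ atTop (𝓝 0))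
    (h : ∀ n, δ n ∈ prokSet M μ ν (δ n)) {F : Set X} (hF : IsClosed F) : μ F ≤ ν F := by
  have hlim := tendsto_measure_iInter_atTop (μ := ν)
    (fun n => (hgen.isOpen_fmExpand F (hδ0 n) (h n).2.1 (hδ0 n)).measurableSet.nullMeasurableSet)
    (fun m n hmn => hM.fmExpand_mono (hδ0 n) (hδ_anti hmn) (hδ_anti hmn))
    ⟨0, measure_ne_top _ _⟩
  rw [hM.iInter_fmExpand_eq hgen hF hδ0 hδ] at hlim
  have hlim' := hlim.add (ENNReal.tendsto_ofReal hδ)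
  rw [ENNReal.ofReal_zero, add_zero] at hlim'
  exact ge_of_tendsto' hlim' fun n => ((h n).2.2 F hF.measurableSet).1

variable [BorelSpace X]

theorem IsFuzzyMetric.eq_of_forall_mem_prokSet (hM : IsFuzzyMetric M luk)
    (hgen : GeneratesTopology M) {μ ν : Measure X} [IsProbabilityMeasure μ]
    [IsProbabilityMeasure ν] {δ : ℕ → ℝ} (hδ0 : ∀ n, 0 < δ n) (hδ_anti : Antitone δ)
    (hδ : Tendsto δ atTop (𝓝 0)) (h : ∀ n, δ n ∈ prokSet M μ ν (δ n)) : μ = ν :=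
  ext_of_generate_finite _ (BorelSpace.measurable_eq.trans borel_eq_generateFrom_isClosed)
    isPiSystem_isClosed (fun _ hF => le_antisymm
      (hM.measure_le_of_forall_mem_prokSet hgen hδ0 hδ_anti hδ h hF)
      (hM.measure_le_of_forall_mem_prokSet hgen hδ0 hδ_anti hδ
        (fun n => prokSet_comm μ ν _ ▸ h n) hF))
    (by simp)

end Prokhorov

section ProbabilityMeasure

variable [MeasurableSpace X]

def probFuzzyProkhorov (M : X → X → ℝ → ℝ) :
    ProbabilityMeasure X → ProbabilityMeasure X → ℝ → ℝ :=
  fun μ ν t => fuzzyProkhorov M μ ν t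

theorem mem_fmBall_probFuzzyProkhorov_of_mem {μ ν : ProbabilityMeasure X} {e r t : ℝ}
    (he : e ∈ prokSet M μ ν t) (her : e < r) : ν ∈ fmBall (probFuzzyProkhorov M) μ r t :=
  show 1 - r < 1 - sInf (prokSet M μ ν t) by linarith [csInf_le prokSet_bddBelow he]

theorem IsFuzzyMetric.mem_fmBall_probFuzzyProkhorov_self (hM : IsFuzzyMetric M luk)
    (μ : ProbabilityMeasure X) {r t : ℝ} (hr : 0 < r) (ht : 0 < t) :
    μ ∈ fmBall (probFuzzyProkhorov M) μ r t :=
  mem_fmBall_probFuzzyProkhorov_of_mem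
    (hM.mem_prokSet_self μ (half_pos (lt_min hr one_pos)) (by linarith [min_le_right r 1]) ht)
    (by linarith [min_le_left r 1])

variable [TopologicalSpace X] [CompactSpace X]

theorem IsFuzzyMetric.prokSet_nonempty (hM : IsFuzzyMetric M luk) (hgen : GeneratesTopology M)
    (μ ν : Measure X) [IsProbabilityMeasure μ] [IsProbabilityMeasure ν] {t : ℝ} (ht : 0 < t) :
    (prokSet M μ ν t).Nonempty := by
  obtain ⟨m, hm, hle⟩ := hM.exists_pos_le hgen ht
  set r := 1 - min m 1 / 2 with hr
  have hfull : ∀ A : Set X, A.Nonempty → fmExpand M A r t = univ := fun A ⟨a, ha⟩ =>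
    eq_univ_of_forall fun y => mem_biUnion ha (show 1 - r < M a y t by
      linarith [hle a y, min_le_left m 1, hr])
  refine ⟨r, by linarith [min_le_right m 1, hr], by linarith [lt_min hm one_pos, hr], fun A _ => ?_⟩
  rcases A.eq_empty_or_nonempty with rfl | hA
  · simp
  · simp only [hfull A hA, measure_univ]
    exact ⟨prob_le_one.trans le_self_add, prob_le_one.trans le_self_add⟩

theorem IsFuzzyMetric.exists_mem_prokSet_of_mem_fmBall (hM : IsFuzzyMetric M luk)
    (hgen : GeneratesTopology M) {μ ν : ProbabilityMeasure X} {r t : ℝ} (ht : 0 < t)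
    (hν : ν ∈ fmBall (probFuzzyProkhorov M) μ r t) : ∃ e ∈ prokSet M μ ν t, e < r :=
  exists_lt_of_csInf_lt (hM.prokSet_nonempty hgen μ ν ht)
    (by linarith [show 1 - r < 1 - sInf (prokSet M μ ν t) from hν])

theorem IsFuzzyMetric.fmBall_probFuzzyProkhorov_mono (hM : IsFuzzyMetric M luk)
    (hgen : GeneratesTopology M) (μ : ProbabilityMeasure X) {r r' t t' : ℝ} (ht : 0 < t)
    (hr : r ≤ r') (htt' : t ≤ t') :
    fmBall (probFuzzyProkhorov M) μ r t ⊆ fmBall (probFuzzyProkhorov M) μ r' t' := fun ν hν => by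
  obtain ⟨e, he, her⟩ := hM.exists_mem_prokSet_of_mem_fmBall hgen ht hν
  exact mem_fmBall_probFuzzyProkhorov_of_mem (hM.mem_prokSet_of_le he ht le_rfl he.2.1 htt')
    (her.trans_le hr)

variable [BorelSpace X]

theorem IsFuzzyMetric.eventually_mem_prokSet (hM : IsFuzzyMetric M luk)
    (hgen : GeneratesTopology M) (μ : ProbabilityMeasure X) {r t : ℝ} (hr0 : 0 < r) (hr1 : r < 1)
    (ht : 0 < t) :
    ∀ᶠ ν : ProbabilityMeasure X in 𝓝 μ, r ∈ prokSet M (μ : Measure X) (ν : Measure X) t := by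
  have := hM.t2Space hgen
  have hr3 : 0 < r / 3 := by linarith
  have ht2 : 0 < t / 2 := half_pos ht
  obtain ⟨C, hC⟩ := isCompact_univ.elim_finite_subcover (fun c => fmBall M c (r / 3) (t / 2))
    (fun c => hgen.isOpen_fmBall c hr3 (by linarith) ht2)
    (fun x _ => mem_iUnion.2 ⟨x, hM.mem_fmBall_self x hr3 ht2⟩)
  -- finitely many Urysohn functions, one for each subfamily `J` of the cover, control every `A`
  let S : Finset X → Set X := fun J => ⋃ c ∈ J, fmBall M c (r / 3) (t / 2)
  let S' : Finset X → Set X := fun J => ⋃ c ∈ J, fmBall M c (2 * (r / 3)) (t / 2)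
  have hSS' : ∀ J, closure (S J) ⊆ S' J := fun J => by
    rw [Finset.closure_biUnion]
    exact iUnion₂_mono fun c _ => hM.closure_fmBall_subset hgen c (by linarith) ht2
  choose g hg0 hg1 hg01 using fun J => exists_continuous_zero_one_of_isClosed
    (isOpen_biUnion fun c _ => hgen.isOpen_fmBall c (r := 2 * (r / 3)) (by linarith)
      (by linarith) ht2).isClosed_compl isClosed_closure
    (disjoint_compl_left_iff_subset.2 (hSS' J))
  have hclose : ∀ᶠ ν : ProbabilityMeasure X in 𝓝 μ, ∀ J ∈ C.powerset,
      |∫ x, g J x ∂(ν : Measure X) - ∫ x, g J x ∂(μ : Measure X)| < r / 2 :=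
    (eventually_all_finset _).2 fun J _ => by
      have hcont := ProbabilityMeasure.continuous_integral_boundedContinuousFunction
        (BoundedContinuousFunction.mkOfCompact (g J))
      simpa only [Real.dist_eq, BoundedContinuousFunction.mkOfCompact_apply] using
        Metric.tendsto_nhds.1 hcont.continuousAt (r / 2) (half_pos hr0)
  filter_upwards [hclose] with ν hν
  refine ⟨hr0, hr1, fun A hA => ?_⟩
  obtain ⟨J, hJC, hAS, hS'A⟩ := hM.exists_subset_biUnion_fmBall ht2 ht2 hC A
  rw [show r / 3 + 2 * (r / 3) = r by ring, add_halves] at hS'A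
  have hgA : EqOn (g J) 1 A := (hg1 J).mono (hAS.trans subset_closure)
  have hgB : EqOn (g J) 0 (fmExpand M A r t)ᶜ := (hg0 J).mono (compl_subset_compl.2 hS'A)
  have hB := (hgen.isOpen_fmExpand A hr0 hr1 ht).measurableSet
  have hg : ∀ κ : ProbabilityMeasure X, Integrable (g J) κ := fun κ =>
    (BoundedContinuousFunction.mkOfCompact (g J)).integrable _
  have hint := abs_lt.1 (hν J (Finset.mem_powerset.2 hJC))
  exact ⟨measure_le_add_of_integral_le_add hA hB (hg μ) (hg ν) (hg01 J) hgA hgB hr0.le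
      (by linarith),
    measure_le_add_of_integral_le_add hA hB (hg ν) (hg μ) (hg01 J) hgA hgB hr0.le
      (by linarith)⟩

theorem IsFuzzyMetric.isOpen_fmBall_probFuzzyProkhorov (hM : IsFuzzyMetric M luk)
    (hgen : GeneratesTopology M) (μ : ProbabilityMeasure X) {r t : ℝ} (hr : r ≤ 1)
    (ht : 0 < t) : IsOpen (fmBall (probFuzzyProkhorov M) μ r t) := by
  refine isOpen_iff_mem_nhds.2 fun ν₀ hν₀ => ?_
  obtain ⟨e, he, her⟩ := hM.exists_mem_prokSet_of_mem_fmBall hgen ht hν₀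
  -- trade a third of the slack `r - e` for time, then spend another third near `ν₀`
  set η := (r - e) / 3 with hη
  have hη0 : 0 < η := by linarith
  obtain ⟨t₀, ⟨ht₀, ht₀t⟩, hunif⟩ := hM.exists_uniform_left_approx hgen ht hη0
  have he' : e + η ∈ prokSet M μ ν₀ t₀ :=
    mem_prokSet_of_fmExpand_subset he (by linarith) (by linarith)
      fun _ => fmExpand_subset_fmExpand_of_forall_sub_le fun x y => (hunif x y).le
  filter_upwards [hM.eventually_mem_prokSet hgen ν₀ hη0 (by linarith [he.1]) (sub_pos.2 ht₀t)]
    with ν hν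
  have := hM.add_mem_prokSet hgen ht₀ (sub_pos.2 ht₀t) he' hν (by linarith)
  rw [add_sub_cancel] at this
  exact mem_fmBall_probFuzzyProkhorov_of_mem this (by linarith)

theorem IsFuzzyMetric.mem_prokSet_of_mem_closure_fmBall (hM : IsFuzzyMetric M luk)
    (hgen : GeneratesTopology M) {μ μ' : ProbabilityMeasure X} {s : ℝ} (hs0 : 0 < s)
    (hs1 : s < 1) (hμ' : μ' ∈ closure (fmBall (probFuzzyProkhorov M) μ (s / 2) (s / 2))) :
    s ∈ prokSet M μ μ' s := by
  obtain ⟨ν, hν', hν⟩ := mem_closure_iff.1 hμ' _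
    (hM.isOpen_fmBall_probFuzzyProkhorov hgen μ' (by linarith) (half_pos hs0))
    (hM.mem_fmBall_probFuzzyProkhorov_self μ' (half_pos hs0) (half_pos hs0))
  obtain ⟨e, he, her⟩ := hM.exists_mem_prokSet_of_mem_fmBall hgen (half_pos hs0) hν
  obtain ⟨e', he', her'⟩ := hM.exists_mem_prokSet_of_mem_fmBall hgen (half_pos hs0) hν'
  rw [prokSet_comm] at he'
  have := hM.add_mem_prokSet hgen (half_pos hs0) (half_pos hs0) he he' (by linarith)
  rw [add_halves] at this
  exact hM.mem_prokSet_of_le this hs0 (by linarith) hs1 le_rfl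

theorem IsFuzzyMetric.exists_fmBall_probFuzzyProkhorov_subset (hM : IsFuzzyMetric M luk)
    (hgen : GeneratesTopology M) {U : Set (ProbabilityMeasure X)} (hU : IsOpen U)
    {μ : ProbabilityMeasure X} (hμ : μ ∈ U) :
    ∃ r t, 0 < r ∧ r < 1 ∧ 0 < t ∧ fmBall (probFuzzyProkhorov M) μ r t ⊆ U := by
  have := hM.t2Space hgen
  set δ : ℕ → ℝ := fun n => 1 / (n + 2) with hδ
  have hδ0 : ∀ n, 0 < δ n := fun n => by positivity
  have hδ1 : ∀ n, δ n < 1 := fun n => by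
    rw [hδ, div_lt_one (by positivity)]
    linarith [n.cast_nonneg (α := ℝ)]
  have hδ_anti : Antitone δ := fun m n hmn => by
    simp only [hδ]
    gcongr
  have hδ_lim : Tendsto δ atTop (𝓝 0) := by
    refine ((tendsto_one_div_add_atTop_nhds_zero_nat (𝕜 := ℝ)).comp
      (tendsto_add_atTop_nat 1)).congr fun n => ?_
    simp only [Function.comp_apply, hδ]
    push_cast
    ring
  by_contra! hcon
  -- a point of the compact set `Uᶜ` in the closure of every ball around `μ` must be `μ` itself
  let K : ℕ → Set (ProbabilityMeasure X) := fun n =>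
    Uᶜ ∩ closure (fmBall (probFuzzyProkhorov M) μ (δ n / 2) (δ n / 2))
  obtain ⟨μ', hμ'⟩ := IsCompact.nonempty_iInter_of_sequence_nonempty_isCompact_isClosed K
    (fun n => inter_subset_inter_right _ (closure_mono (hM.fmBall_probFuzzyProkhorov_mono hgen μ
      (half_pos (hδ0 _)) (by linarith [hδ_anti n.le_succ]) (by linarith [hδ_anti n.le_succ]))))
    (fun n => by
      obtain ⟨ν, hν, hνU⟩ := not_subset.1 (hcon _ _ (half_pos (hδ0 n)) (by linarith [hδ1 n])
        (half_pos (hδ0 n)))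
      exact ⟨ν, hνU, subset_closure hν⟩)
    (hU.isClosed_compl.inter isClosed_closure).isCompact
    (fun n => hU.isClosed_compl.inter isClosed_closure)
  have hμμ' : (μ : Measure X) = μ' := hM.eq_of_forall_mem_prokSet hgen hδ0 hδ_anti hδ_lim
    fun n => hM.mem_prokSet_of_mem_closure_fmBall hgen (hδ0 n) (hδ1 n) (mem_iInter.1 hμ' n).2
  exact (mem_iInter.1 hμ' 0).1 (ProbabilityMeasure.toMeasure_injective hμμ' ▸ hμ)

theorem IsFuzzyMetric.generatesTopology_probFuzzyProkhorov (hM : IsFuzzyMetric M luk)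
    (hgen : GeneratesTopology M) : GeneratesTopology (probFuzzyProkhorov (X := X) M) := by
  refine TopologicalSpace.isTopologicalBasis_of_isOpen_of_nhds ?_ fun μ U hμ hU => ?_
  · rintro _ ⟨μ, r, t, -, hr, ht, rfl⟩
    exact hM.isOpen_fmBall_probFuzzyProkhorov hgen μ hr.le ht
  · obtain ⟨r, t, hr0, hr1, ht, hsub⟩ := hM.exists_fmBall_probFuzzyProkhorov_subset hgen hU hμ
    exact ⟨_, ⟨μ, r, t, hr0, hr1, ht, rfl⟩, hM.mem_fmBall_probFuzzyProkhorov_self μ hr0 ht, hsub⟩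

end ProbabilityMeasure

end FuzzyProkhorov

/-- weak* convergence implies convergence in the fuzzy Prokhorov metric,
and the topology induced by `M̂` coincides with the weak* topology on `P(X)`. -/
theorem weakStar_implies_fuzzyProkhorov_tendsto {X : Type*} [TopologicalSpace X]
    [CompactSpace X] [MeasurableSpace X] [BorelSpace X]
    (M : X → X → ℝ → ℝ) (hM : IsFuzzyMetric M luk) (hgen : GeneratesTopology M) :
    (∀ (μs : ℕ → ProbabilityMeasure X) (μ : ProbabilityMeasure X),
      (∀ φ : C(X, ℝ), Filter.Tendsto (fun i => ∫ x, φ x ∂(μs i : Measure X))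
        Filter.atTop (nhds (∫ x, φ x ∂(μ : Measure X)))) →
      ∀ t : ℝ, 0 < t → ∀ ε ∈ Ioo (0:ℝ) 1, ∃ N : ℕ, ∀ i ≥ N,
        1 - ε < fuzzyProkhorov M (μs i : Measure X) (μ : Measure X) t) ∧
    GeneratesTopology
      (fun (μ ν : ProbabilityMeasure X) (t : ℝ) =>
        fuzzyProkhorov M (μ : Measure X) (ν : Measure X) t) := by
  refine ⟨fun μs μ h t ht ε hε => ?_, hM.generatesTopology_probFuzzyProkhorov hgen⟩
  have hlim : Tendsto μs atTop (𝓝 μ) :=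
    ProbabilityMeasure.tendsto_iff_forall_integral_tendsto.2 fun f => h f.toContinuousMap
  have hball := (hM.isOpen_fmBall_probFuzzyProkhorov hgen μ hε.2.le ht).mem_nhds
    (hM.mem_fmBall_probFuzzyProkhorov_self μ hε.1 ht)
  obtain ⟨N, hN⟩ := eventually_atTop.1 (hlim.eventually hball)
  exact ⟨N, fun i hi => fuzzyProkhorov_comm (M := M) (μ : Measure X) _ t ▸ hN i hi⟩
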